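/- arXiv:math/0612277 — 2 statements merged into one kernel-verified Lean document; each statement's English description precedes it below -/
import Mathlib

section
/- For j ≥ 2 let r_j be the pattern j (j−1) ⋯ 2 1 (j+1) of length j+1, and let F_j(x) = ∑_{n≥0} |S_n(123, r_j)| x^n be the generating function, in ℤ⟦x⟧, of the numbers of permutations of {1,…,n} avoiding both 123 and r_j. Then for every k ≥ 3, F_k(x)·(1 − x·F_{k−1}(x)) = 1, i.e. F_k(x) = 1/(1 − x F_{k−1}(x)). -/
/-- A permutation `σ` of `{1,…,n}` contains the pattern `τ` (given in one-line
notation as a function `Fin k → ℕ`) if there is a strictly increasing choice of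
indices along which `σ` is order-isomorphic to `τ`. -/
def Contains {n k : ℕ} (σ : Equiv.Perm (Fin n)) (τ : Fin k → ℕ) : Prop :=
  ∃ f : Fin k → Fin n, StrictMono f ∧ ∀ a b : Fin k, σ (f a) < σ (f b) ↔ τ a < τ b

/-- `σ` avoids the pattern `τ`. -/
def Avoids {n k : ℕ} (σ : Equiv.Perm (Fin n)) (τ : Fin k → ℕ) : Prop :=
  ¬ Contains σ τ

def p123 : Fin 3 → ℕ := ![1, 2, 3]
def p132 : Fin 3 → ℕ := ![1, 3, 2]
def p213 : Fin 3 → ℕ := ![2, 1, 3]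
def p1432 : Fin 4 → ℕ := ![1, 4, 3, 2]
def p3214 : Fin 4 → ℕ := ![3, 2, 1, 4]
def p2143 : Fin 4 → ℕ := ![2, 1, 4, 3]

/-- The pattern `q_k = 1 (k+1) k (k-1) ⋯ 2` of length `k+1` (one-line notation,
position `j` is 0-indexed here, values 1-indexed). -/
def qpat (k : ℕ) : Fin (k + 1) → ℕ := fun j => if j.val = 0 then 1 else k + 2 - j.val

/-- The pattern `r_k = k (k-1) ⋯ 2 1 (k+1)` of length `k+1`. -/
def rpat (k : ℕ) : Fin (k + 1) → ℕ := fun j => if j.val = k then k + 1 else k - j.val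

/-- The pattern `s_k = (k-1)(k-2) ⋯ 2 1 (k+1) k` of length `k+1`. -/
def spat (k : ℕ) : Fin (k + 1) → ℕ := fun j =>
  if j.val = k - 1 then k + 1 else if j.val = k then k else k - 1 - j.val

/-- The pattern `u_k = 2 1 (k+1) k (k-1) ⋯ 4 3` of length `k+1`. -/
def upat (k : ℕ) : Fin (k + 1) → ℕ := fun j =>
  if j.val = 0 then 2 else if j.val = 1 then 1 else k + 3 - j.val

open Finset Equiv



/-- transfer matrix entry -/
def Mm (M t₀ t : ℕ) : ℕ :=
  (if t = min (t₀ + 1) M then 1 else 0) + (if 1 ≤ t ∧ t ≤ t₀ then 1 else 0)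

/-- number of valid paths of given length from capped height `s`, bound `M` -/
def fv (M : ℕ) : ℕ → ℕ → ℕ
  | 0, _ => 1
  | n + 1, s => fv M n (min (s + 1) M) + ∑ c ∈ range (min s M), fv M n (c + 1)

/-- counts by endpoint, built from the right -/
def vc (M : ℕ) : ℕ → ℕ → ℕ
  | 0, t => if t = 0 then 1 else 0
  | n + 1, t => ∑ t₀ ∈ range (M + 1), vc M n t₀ * Mm M t₀ t

lemma fv_matrix (M N s : ℕ) (hs : s ≤ M) :
    fv M (N + 1) s = ∑ t ∈ range (M + 1), Mm M s t * fv M N t := by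
  have h1 : ∑ t ∈ range (M + 1), (if t = min (s + 1) M then 1 else 0) * fv M N t
      = fv M N (min (s + 1) M) := by
    rw [Finset.sum_eq_single (min (s + 1) M)]
    · simp
    · intro b _ hb; simp [hb]
    · intro h; exact absurd (Finset.mem_range.mpr (by omega)) h
  have h2 : ∑ t ∈ range (M + 1), (if 1 ≤ t ∧ t ≤ s then 1 else 0) * fv M N t
      = ∑ c ∈ range (min s M), fv M N (c + 1) := by
    rw [min_eq_left hs]
    have heq : (range (M + 1)).filter (fun t => 1 ≤ t ∧ t ≤ s) = (range s).image (· + 1) := by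
      ext x
      simp only [mem_filter, mem_range, mem_image]
      constructor
      · rintro ⟨_, h1, h2⟩; exact ⟨x - 1, by omega, by omega⟩
      · rintro ⟨c, hc, rfl⟩; omega
    simp only [ite_mul, one_mul, zero_mul]
    rw [← Finset.sum_filter, heq, Finset.sum_image (by intro a _ b _ h; beta_reduce at h; omega)]
  simp only [Mm, add_mul, Finset.sum_add_distrib, h1, h2, fv]

lemma vc_fv (M n : ℕ) : ∀ N, (∑ t ∈ range (M + 1), vc M n t * fv M N t) = fv M (n + N) 0 := by
  induction n with
  | zero =>
    intro N
    rw [Finset.sum_eq_single 0]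
    · simp [vc]
    · intro b _ hb; simp [vc, hb]
    · intro h; exact absurd (Finset.mem_range.mpr (by omega)) h
  | succ n ih =>
    intro N
    have key : ∀ t₀ ∈ range (M + 1),
        vc M n t₀ * fv M (N + 1) t₀ = ∑ t ∈ range (M + 1), vc M n t₀ * (Mm M t₀ t * fv M N t) := by
      intro t₀ ht₀
      rw [← Finset.mul_sum, ← fv_matrix M N t₀ (by simp at ht₀; omega)]
    calc ∑ t ∈ range (M + 1), vc M (n + 1) t * fv M N t
        = ∑ t ∈ range (M + 1), ∑ t₀ ∈ range (M + 1), vc M n t₀ * Mm M t₀ t * fv M N t := by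
          simp only [vc, Finset.sum_mul]
      _ = ∑ t₀ ∈ range (M + 1), ∑ t ∈ range (M + 1), vc M n t₀ * (Mm M t₀ t * fv M N t) := by
          rw [Finset.sum_comm]; simp [mul_assoc]
      _ = ∑ t₀ ∈ range (M + 1), vc M n t₀ * fv M (N + 1) t₀ :=
          Finset.sum_congr rfl (fun t₀ ht₀ => (key t₀ ht₀).symm)
      _ = fv M (n + (N + 1)) 0 := ih (N + 1)
      _ = fv M (n + 1 + N) 0 := by ring_nf

lemma vc_sum (M n : ℕ) : (∑ t ∈ range (M + 1), vc M n t) = fv M n 0 := by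
  have := vc_fv M n 0
  simpa [fv] using this

lemma fv_zero_succ (M n : ℕ) (hM : 1 ≤ M) : fv M (n + 1) 0 = fv M n 1 := by
  simp [fv, min_eq_left hM]

/-- the key convolution-type lemma -/
lemma fv_conv_aux (m : ℕ) : ∀ n, ∀ s', s' + 1 ≤ m + 1 →
    fv (m + 1) n (s' + 1) = fv m n s'
      + ∑ i ∈ range n, fv m i s' * fv (m + 1) (n - 1 - i) 1 := by
  intro n
  induction n with
  | zero => intro s h2; simp [fv]
  | succ n ih =>
    intro s' h2
    simp only [Nat.add_sub_cancel]
    have hmin1 : min (s' + 1) (m + 1) = s' + 1 := min_eq_left h2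
    have hmins : min (s' + 1 + 1) (m + 1) - 1 = min (s' + 1) m := by omega
    have hmins' : min (s' + 1 + 1) (m + 1) = min (s' + 1) m + 1 := by omega
    set A : ℕ → ℕ := fun i => fv (m + 1) (n - 1 - i) 1 with hA
    have key1 : fv (m + 1) (n + 1) (s' + 1)
        = fv (m + 1) n (min (s' + 1) m + 1) + ∑ c ∈ range (s' + 1), fv (m + 1) n (c + 1) := by
      simp only [fv, hmin1, hmins']
    rw [key1]
    have e1 := ih (min (s' + 1) m) (by omega)
    have e2 : ∀ c ∈ range (s' + 1), fv (m + 1) n (c + 1)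
        = fv m n c + ∑ i ∈ range n, fv m i c * A i := by
      intro c hc
      exact ih c (by simp at hc; omega)
    rw [e1, Finset.sum_congr rfl e2]
    -- RHS expansions
    have goal_rhs1 : fv m (n + 1) s'
        = fv m n (min (s' + 1) m) + ∑ c ∈ range (min s' m), fv m n (c + 1) := by
      simp only [fv]
    have hsm : min s' m = s' := min_eq_left (by omega)
    have goal_rhs2 : ∑ i ∈ range (n + 1), fv m i s' * fv (m + 1) (n - i) 1
        = fv (m + 1) n 1 + ∑ i ∈ range n, fv m (i + 1) s' * A i := by
      rw [Finset.sum_range_succ']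
      have h3 : ∀ i ∈ range n, fv m (i + 1) s' * fv (m + 1) (n - (i + 1)) 1
          = fv m (i + 1) s' * A i := by
        intro i hi; simp only [hA]; congr 2; omega
      rw [Finset.sum_congr rfl h3]
      simp [fv, add_comm]
    have expand : ∀ i ∈ range n, fv m (i + 1) s' * A i
        = fv m i (min (s' + 1) m) * A i + ∑ c ∈ range s', fv m i (c + 1) * A i := by
      intro i _
      have : fv m (i + 1) s' = fv m i (min (s' + 1) m) + ∑ c ∈ range s', fv m i (c + 1) := by
        simp only [fv, hsm]
      rw [this, add_mul, Finset.sum_mul]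
    have ih1 : fv (m + 1) n 1 = fv m n 0 + ∑ i ∈ range n, fv m i 0 * A i := by
      simpa using ih 0 (by omega)
    rw [goal_rhs1, goal_rhs2, Finset.sum_congr rfl expand, ih1, hsm]
    -- split LHS sum over range (s'+1)
    rw [Finset.sum_add_distrib]
    rw [Finset.sum_range_succ' (fun c => fv m n c) s']
    rw [Finset.sum_range_succ' (fun c => ∑ i ∈ range n, fv m i c * A i) s']
    rw [Finset.sum_add_distrib, Finset.sum_comm]
    ring

section PatLemmas

variable {n N : ℕ}

lemma strictMono_vec3 {α} [Preorder α] {x y z : α} (h1 : x < y) (h2 : y < z) :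
    StrictMono ![x, y, z] := by
  have h3 := h1.trans h2
  intro a b hab
  fin_cases a <;> fin_cases b <;>
    first
      | exact absurd hab (by decide)
      | exact h1
      | exact h2
      | exact h3

lemma contains_of_strictMono (σ : Perm (Fin n)) (π : Perm (Fin N)) {k : ℕ} (τ : Fin k → ℕ)
    (e : Fin n → Fin N) (he : StrictMono e)
    (hv : ∀ a b : Fin n, σ a < σ b ↔ π (e a) < π (e b)) :
    Contains σ τ → Contains π τ := by
  rintro ⟨f, hf, hp⟩
  exact ⟨e ∘ f, he.comp hf, fun a b => by
    simp only [Function.comp_apply, ← hv, hp]⟩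

lemma contains123_iff (σ : Perm (Fin n)) :
    Contains σ p123 ↔ ∃ i j l : Fin n, i < j ∧ j < l ∧ σ i < σ j ∧ σ j < σ l := by
  constructor
  · rintro ⟨f, hf, hp⟩
    refine ⟨f 0, f 1, f 2, hf (by decide), hf (by decide), ?_, ?_⟩
    · exact (hp 0 1).2 (by decide)
    · exact (hp 1 2).2 (by decide)
  · rintro ⟨i, j, l, hij, hjl, h1, h2⟩
    have hm : StrictMono ![i, j, l] := strictMono_vec3 hij hjl
    have he : (fun a : Fin 3 => σ (![i, j, l] a)) = ![σ i, σ j, σ l] := by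
      funext a; fin_cases a <;> rfl
    have hm2 : StrictMono (fun a : Fin 3 => σ (![i, j, l] a)) := by
      rw [he]; exact strictMono_vec3 h1 h2
    have hp : ∀ a b : Fin 3, a < b ↔ p123 a < p123 b := by decide
    exact ⟨![i, j, l], hm, fun a b => (hm2.lt_iff_lt).trans (hp a b)⟩

lemma rpat_castSucc (K : ℕ) (a : Fin K) : rpat K (Fin.castSucc a) = K - a.val := by
  simp only [rpat, Fin.coe_castSucc]
  rw [if_neg (by have := a.isLt; omega)]

lemma rpat_last (K : ℕ) : rpat K (Fin.last K) = K + 1 := by simp [rpat]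

lemma contains_rpat_intro (σ : Perm (Fin N)) (K : ℕ) (g : Fin K → Fin N) (p : Fin N)
    (hmono : StrictMono g) (hlt : ∀ a, g a < p)
    (hdec : ∀ a b : Fin K, a < b → σ (g b) < σ (g a))
    (hval : ∀ a, σ (g a) < σ p) : Contains σ (rpat K) := by
  have htri : ∀ a b : Fin K, σ (g a) < σ (g b) ↔ b < a := by
    intro a b
    constructor
    · intro h
      rcases lt_trichotomy a b with h' | rfl | h'
      · exact absurd h (asymm (hdec a b h'))
      · exact absurd h (lt_irrefl _)
      · exact h'
    · exact fun h' => hdec b a h'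
  refine ⟨Fin.snoc g p, ?_, ?_⟩
  · intro a b hab
    rcases Fin.eq_castSucc_or_eq_last b with ⟨b', rfl⟩ | rfl
    · rcases Fin.eq_castSucc_or_eq_last a with ⟨a', rfl⟩ | rfl
      · simpa [Fin.snoc_castSucc] using hmono (Fin.castSucc_lt_castSucc_iff.mp hab)
      · exact absurd hab (asymm (Fin.castSucc_lt_last b'))
    · rcases Fin.eq_castSucc_or_eq_last a with ⟨a', rfl⟩ | rfl
      · simpa [Fin.snoc_castSucc, Fin.snoc_last] using hlt a'
      · exact absurd hab (lt_irrefl _)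
  · intro a b
    rcases Fin.eq_castSucc_or_eq_last a with ⟨a', rfl⟩ | rfl <;>
      rcases Fin.eq_castSucc_or_eq_last b with ⟨b', rfl⟩ | rfl
    · rw [Fin.snoc_castSucc, Fin.snoc_castSucc, rpat_castSucc, rpat_castSucc, htri]
      have := a'.isLt; have := b'.isLt
      rw [Fin.lt_def]
      omega
    · rw [Fin.snoc_castSucc, Fin.snoc_last, rpat_castSucc, rpat_last]
      exact iff_of_true (hval a') (by have := a'.isLt; omega)
    · rw [Fin.snoc_castSucc, Fin.snoc_last, rpat_castSucc, rpat_last]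
      exact iff_of_false (asymm (hval b')) (by omega)
    · exact iff_of_false (lt_irrefl _) (lt_irrefl _)

lemma contains_rpat_elim (σ : Perm (Fin N)) (K : ℕ) (h : Contains σ (rpat K)) :
    ∃ f : Fin (K + 1) → Fin N, StrictMono f ∧
      (∀ a b : Fin K, a < b → σ (f (Fin.castSucc b)) < σ (f (Fin.castSucc a))) ∧
      (∀ a : Fin K, σ (f (Fin.castSucc a)) < σ (f (Fin.last K))) := by
  obtain ⟨f, hf, hp⟩ := h
  refine ⟨f, hf, ?_, ?_⟩
  · intro a b hab
    apply (hp _ _).2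
    rw [rpat_castSucc, rpat_castSucc]
    have := b.isLt
    rw [Fin.lt_def] at hab
    omega
  · intro a
    apply (hp _ _).2
    rw [rpat_castSucc, rpat_last]
    have := a.isLt
    omega

end PatLemmas


open Finset Equiv

section Ins

variable {n : ℕ}

/-- value lemma for succAbove -/
lemma succAbove_val (r : Fin (n + 1)) (v : Fin n) :
    ((r.succAbove v : Fin (n + 1)) : ℕ) = if (v : ℕ) < (r : ℕ) then (v : ℕ) else (v : ℕ) + 1 := by
  rw [Fin.succAbove]
  split_ifs with h1 h2 h2
  · rfl
  · exfalso; rw [Fin.lt_def] at h1; simp only [Fin.coe_castSucc] at h1; omega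
  · exfalso; apply h1; rw [Fin.lt_def]; simpa using h2
  · rfl

lemma succAbove_lt_succAbove (r : Fin (n + 1)) (a b : Fin n) :
    r.succAbove a < r.succAbove b ↔ a < b := by
  rw [Fin.lt_def, Fin.lt_def, succAbove_val, succAbove_val]
  split_ifs <;> omega

def insFun (σ : Perm (Fin n)) (r : Fin (n + 1)) : Fin (n + 1) → Fin (n + 1) :=
  Fin.lastCases r (fun p => r.succAbove (σ p))

lemma insFun_last (σ : Perm (Fin n)) (r : Fin (n + 1)) : insFun σ r (Fin.last n) = r := by
  simp only [insFun, Fin.lastCases_last]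

lemma insFun_castSucc (σ : Perm (Fin n)) (r : Fin (n + 1)) (p : Fin n) :
    insFun σ r (Fin.castSucc p) = r.succAbove (σ p) := by
  simp only [insFun, Fin.lastCases_castSucc]

lemma insFun_injective (σ : Perm (Fin n)) (r : Fin (n + 1)) : Function.Injective (insFun σ r) := by
  intro x y h
  rcases Fin.eq_castSucc_or_eq_last x with ⟨x', rfl⟩ | rfl <;>
    rcases Fin.eq_castSucc_or_eq_last y with ⟨y', rfl⟩ | rfl
  · rw [insFun_castSucc, insFun_castSucc] at h
    rw [σ.injective (Fin.succAbove_right_injective h)]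
  · rw [insFun_castSucc, insFun_last] at h
    exact absurd h (Fin.succAbove_ne r _)
  · rw [insFun_castSucc, insFun_last] at h
    exact absurd h.symm (Fin.succAbove_ne r _)
  · rfl

noncomputable def insPerm (σ : Perm (Fin n)) (r : Fin (n + 1)) : Perm (Fin (n + 1)) :=
  Equiv.ofBijective _ (Finite.injective_iff_bijective.mp (insFun_injective σ r))

lemma insPerm_last (σ : Perm (Fin n)) (r : Fin (n + 1)) : insPerm σ r (Fin.last n) = r :=
  insFun_last σ r

lemma insPerm_castSucc (σ : Perm (Fin n)) (r : Fin (n + 1)) (p : Fin n) :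
    insPerm σ r (Fin.castSucc p) = r.succAbove (σ p) :=
  insFun_castSucc σ r p

noncomputable def insEquiv : Perm (Fin n) × Fin (n + 1) ≃ Perm (Fin (n + 1)) := by
  apply Equiv.ofBijective (fun p => insPerm p.1 p.2)
  rw [Fintype.bijective_iff_injective_and_card]
  constructor
  · rintro ⟨σ, r⟩ ⟨σ', r'⟩ h
    simp only at h
    have hr : r = r' := by
      rw [← insPerm_last σ r, ← insPerm_last σ' r', h]
    subst hr
    have hσ : σ = σ' := by
      ext p
      have := DFunLike.congr_fun h (Fin.castSucc p)
      rw [insPerm_castSucc, insPerm_castSucc] at this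
      exact congrArg _ (Fin.succAbove_right_injective this)
    rw [hσ]
  · simp [Fintype.card_perm, Nat.factorial_succ, mul_comm]

lemma insEquiv_apply (σ : Perm (Fin n)) (r : Fin (n + 1)) :
    insEquiv (σ, r) = insPerm σ r := rfl

end Ins


section DecBsec

variable {n : ℕ}

lemma exists_castSucc_of_lt_last {i : Fin (n + 1)} (h : i < Fin.last n) :
    ∃ i', i = Fin.castSucc i' := by
  rcases Fin.eq_castSucc_or_eq_last i with h' | rfl
  · exact h'
  · exact absurd h (lt_irrefl _)

def DecB (σ : Perm (Fin n)) (r : ℕ) : Prop :=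
  ∀ i j : Fin n, i < j → (σ j : ℕ) < r → σ j < σ i

instance decB_decidable (σ : Perm (Fin n)) : DecidablePred (DecB σ) := fun r => by
  unfold DecB; infer_instance

def mdec (σ : Perm (Fin n)) : ℕ := Nat.findGreatest (DecB σ) n

def GoodP (m : ℕ) (σ : Perm (Fin n)) : Prop := Avoids σ p123 ∧ Avoids σ (rpat (m + 1))

def statm (m : ℕ) (σ : Perm (Fin n)) : ℕ := min (mdec σ) m

lemma decB_mono {σ : Perm (Fin n)} {r' r : ℕ} (h : r' ≤ r) (hd : DecB σ r) : DecB σ r' :=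
  fun i j hij hv => hd i j hij (lt_of_lt_of_le hv h)

lemma decB_zero (σ : Perm (Fin n)) : DecB σ 0 := fun _ _ _ h => absurd h (by omega)

lemma mdec_le (σ : Perm (Fin n)) : mdec σ ≤ n := by
  rw [mdec]; exact Nat.findGreatest_le n

lemma decB_mdec (σ : Perm (Fin n)) : DecB σ (mdec σ) :=
  Nat.findGreatest_spec (Nat.zero_le n) (decB_zero σ)

lemma le_mdec_iff {σ : Perm (Fin n)} {r : ℕ} (hr : r ≤ n) : DecB σ r ↔ r ≤ mdec σ :=
  ⟨fun h => Nat.le_findGreatest hr h, fun h => decB_mono h (decB_mdec σ)⟩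

lemma statm_le (m : ℕ) (σ : Perm (Fin n)) : statm m σ ≤ m := min_le_right _ _

lemma statm_le_n (m : ℕ) (σ : Perm (Fin n)) : statm m σ ≤ n :=
  le_trans (min_le_left _ _) (mdec_le σ)

lemma contains123_insPerm (σ : Perm (Fin n)) (r : Fin (n + 1)) :
    Contains (insPerm σ r) p123 ↔ Contains σ p123 ∨ ¬ DecB σ (r : ℕ) := by
  rw [contains123_iff, contains123_iff]
  constructor
  · rintro ⟨i, j, l, hij, hjl, h1, h2⟩
    rcases Fin.eq_castSucc_or_eq_last l with ⟨l', rfl⟩ | rfl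
    · have hjlt : j < Fin.last n := hjl.trans (Fin.castSucc_lt_last l')
      obtain ⟨j', rfl⟩ := exists_castSucc_of_lt_last hjlt
      obtain ⟨i', rfl⟩ := exists_castSucc_of_lt_last (hij.trans hjlt)
      left
      rw [insPerm_castSucc, insPerm_castSucc, succAbove_lt_succAbove] at h1
      rw [insPerm_castSucc, insPerm_castSucc, succAbove_lt_succAbove] at h2
      exact ⟨i', j', l', Fin.castSucc_lt_castSucc_iff.mp hij,
        Fin.castSucc_lt_castSucc_iff.mp hjl, h1, h2⟩
    · right
      intro hdec
      obtain ⟨j', rfl⟩ := exists_castSucc_of_lt_last hjl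
      obtain ⟨i', rfl⟩ := exists_castSucc_of_lt_last (hij.trans hjl)
      rw [insPerm_castSucc, insPerm_castSucc, succAbove_lt_succAbove] at h1
      have hv2 : (σ j' : ℕ) < (r : ℕ) := by
        rw [insPerm_castSucc, insPerm_last, Fin.lt_def, succAbove_val] at h2
        split at h2 <;> omega
      exact absurd (hdec i' j' (Fin.castSucc_lt_castSucc_iff.mp hij) hv2) (asymm h1)
  · rintro (⟨i, j, l, hij, hjl, h1, h2⟩ | h)
    · refine ⟨Fin.castSucc i, Fin.castSucc j, Fin.castSucc l,
        Fin.castSucc_lt_castSucc_iff.mpr hij, Fin.castSucc_lt_castSucc_iff.mpr hjl, ?_, ?_⟩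
      · rw [insPerm_castSucc, insPerm_castSucc, succAbove_lt_succAbove]; exact h1
      · rw [insPerm_castSucc, insPerm_castSucc, succAbove_lt_succAbove]; exact h2
    · rw [DecB] at h; push_neg at h
      obtain ⟨i, j, hij, hv, hnot⟩ := h
      have hne : σ i ≠ σ j := fun e => (ne_of_lt hij) (σ.injective e)
      have hlt : σ i < σ j := lt_of_le_of_ne hnot hne
      refine ⟨Fin.castSucc i, Fin.castSucc j, Fin.last n,
        Fin.castSucc_lt_castSucc_iff.mpr hij, Fin.castSucc_lt_last j, ?_, ?_⟩
      · rw [insPerm_castSucc, insPerm_castSucc, succAbove_lt_succAbove]; exact hlt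
      · rw [insPerm_castSucc, insPerm_last, Fin.lt_def, succAbove_val]
        split <;> omega

lemma avoids123_insPerm (σ : Perm (Fin n)) (r : Fin (n + 1)) :
    Avoids (insPerm σ r) p123 ↔ Avoids σ p123 ∧ DecB σ (r : ℕ) := by
  rw [Avoids, Avoids, contains123_insPerm]
  tauto

lemma contains_rpat_insPerm_of (σ : Perm (Fin n)) (r : Fin (n + 1)) (K : ℕ) :
    Contains σ (rpat K) → Contains (insPerm σ r) (rpat K) := by
  apply contains_of_strictMono σ (insPerm σ r) (rpat K) Fin.castSucc
    (fun a b hab => Fin.castSucc_lt_castSucc_iff.mpr hab)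
  intro a b
  rw [insPerm_castSucc, insPerm_castSucc, succAbove_lt_succAbove]

lemma card_sigma_lt (σ : Perm (Fin n)) (c : ℕ) (hc : c ≤ n) :
    (univ.filter fun q : Fin n => (σ q : ℕ) < c).card = c := by
  have h : (univ.filter fun q : Fin n => (σ q : ℕ) < c).card = (range c).card := by
    apply Finset.card_bij (fun q _ => (σ q : ℕ))
    · intro a ha
      simp only [mem_filter] at ha
      exact mem_range.mpr ha.2
    · intro a _ b _ hab
      exact σ.injective (Fin.val_injective hab)
    · intro x hx
      rw [mem_range] at hx
      refine ⟨σ.symm ⟨x, by omega⟩, ?_, ?_⟩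
      · simp only [mem_filter, mem_univ, true_and, Equiv.apply_symm_apply]
        exact hx
      · simp
  rw [h, card_range]

lemma contains_rpat_insPerm_chain (σ : Perm (Fin n)) (r : Fin (n + 1)) (K : ℕ)
    (hdec : DecB σ (r : ℕ)) (hKr : K ≤ (r : ℕ)) : Contains (insPerm σ r) (rpat K) := by
  have hrn : (r : ℕ) ≤ n := by have := r.isLt; omega
  have hcard : (univ.filter fun q : Fin n => (σ q : ℕ) < (r : ℕ)).card = (r : ℕ) :=
    card_sigma_lt σ _ hrn
  set emb := (univ.filter fun q : Fin n => (σ q : ℕ) < (r : ℕ)).orderEmbOfFin hcard with hemb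
  have hmem : ∀ x : Fin (r : ℕ), (σ (emb x) : ℕ) < (r : ℕ) := by
    intro x
    have := Finset.orderEmbOfFin_mem _ hcard x
    rw [mem_filter] at this
    exact this.2
  apply contains_rpat_intro (insPerm σ r) K
    (fun a => Fin.castSucc (emb (Fin.castLE hKr a))) (Fin.last n)
  · intro a b hab
    apply Fin.castSucc_lt_castSucc_iff.mpr
    apply emb.strictMono
    rw [Fin.lt_def] at hab ⊢
    exact hab
  · intro a; exact Fin.castSucc_lt_last _
  · intro a b hab
    rw [insPerm_castSucc, insPerm_castSucc, succAbove_lt_succAbove]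
    apply hdec
    · apply emb.strictMono
      rw [Fin.lt_def] at hab ⊢
      exact hab
    · exact hmem _
  · intro a
    rw [insPerm_castSucc, insPerm_last, Fin.lt_def, succAbove_val]
    have := hmem (Fin.castLE hKr a)
    split <;> omega

lemma contains_rpat_insPerm_elim (σ : Perm (Fin n)) (r : Fin (n + 1)) (K : ℕ)
    (h : Contains (insPerm σ r) (rpat K)) : Contains σ (rpat K) ∨ K ≤ (r : ℕ) := by
  obtain ⟨f, hf, hp⟩ := h
  by_cases hl : f (Fin.last K) = Fin.last n
  · right
    have hne : ∀ a : Fin K, f (Fin.castSucc a) < Fin.last n := by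
      intro a; rw [← hl]; exact hf (Fin.castSucc_lt_last a)
    choose g hg using fun a => exists_castSucc_of_lt_last (hne a)
    have hvlt : ∀ a : Fin K, (σ (g a) : ℕ) < (r : ℕ) := by
      intro a
      have h1 : insPerm σ r (f (Fin.castSucc a)) < insPerm σ r (f (Fin.last K)) := by
        apply (hp _ _).2
        rw [rpat_castSucc, rpat_last]
        have := a.isLt; omega
      rw [hl, hg a, insPerm_castSucc, insPerm_last, Fin.lt_def, succAbove_val] at h1
      split at h1 <;> omega
    have hinj : Function.Injective g := by
      intro a b hab
      have heq : f (Fin.castSucc a) = f (Fin.castSucc b) := by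
        rw [hg a, hg b, hab]
      exact Fin.castSucc_inj.mp (hf.injective heq)
    have hcard := card_sigma_lt σ (r : ℕ) (by have := r.isLt; omega)
    have hle : (univ : Finset (Fin K)).card
        ≤ (univ.filter fun q : Fin n => (σ q : ℕ) < (r : ℕ)).card := by
      apply Finset.card_le_card_of_injOn g
      · intro a _
        simp only [Finset.mem_coe, mem_filter, mem_univ, true_and]
        exact hvlt a
      · intro a _ b _ hab; exact hinj hab
    rw [hcard] at hle
    simpa using hle
  · left
    have hlt : ∀ a : Fin (K + 1), f a < Fin.last n := by
      intro a
      exact lt_of_le_of_lt (hf.monotone (Fin.le_last a)) (lt_of_le_of_ne (Fin.le_last _) hl)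
    choose g hg using fun a => exists_castSucc_of_lt_last (hlt a)
    refine ⟨g, ?_, ?_⟩
    · intro a b hab
      have h2 := hf hab
      rw [hg a, hg b] at h2
      exact Fin.castSucc_lt_castSucc_iff.mp h2
    · intro a b
      rw [← hp a b, hg a, hg b, insPerm_castSucc, insPerm_castSucc, succAbove_lt_succAbove]

lemma decB_insPerm_zero (σ : Perm (Fin n)) (a : ℕ) :
    DecB (insPerm σ 0) (a + 1) ↔ DecB σ a := by
  have h0 : ((0 : Fin (n + 1)) : ℕ) = 0 := rfl
  constructor
  · intro h i j hij hv
    have := h (Fin.castSucc i) (Fin.castSucc j) (Fin.castSucc_lt_castSucc_iff.mpr hij) ?_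
    · rw [Fin.lt_def, insPerm_castSucc, insPerm_castSucc, succAbove_val, succAbove_val] at this
      rw [Fin.lt_def]
      simp only [h0] at this
      split at this <;> split at this <;> omega
    · rw [insPerm_castSucc, succAbove_val]
      simp only [h0]
      split <;> omega
  · intro h i j hij hv
    rcases Fin.eq_castSucc_or_eq_last j with ⟨j', rfl⟩ | rfl
    · obtain ⟨i', rfl⟩ := exists_castSucc_of_lt_last (hij.trans (Fin.castSucc_lt_last j'))
      rw [insPerm_castSucc, succAbove_val] at hv
      simp only [h0] at hv
      have hv' : (σ j' : ℕ) < a := by split at hv <;> omega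
      have hs := h i' j' (Fin.castSucc_lt_castSucc_iff.mp hij) hv'
      rw [Fin.lt_def, insPerm_castSucc, insPerm_castSucc, succAbove_val, succAbove_val]
      simp only [h0]
      rw [Fin.lt_def] at hs
      split <;> split <;> omega
    · obtain ⟨i', rfl⟩ := exists_castSucc_of_lt_last hij
      rw [Fin.lt_def, insPerm_castSucc, insPerm_last, succAbove_val]
      simp only [h0]
      split <;> omega

lemma decB_insPerm_pos (σ : Perm (Fin n)) (r : Fin (n + 1)) (a : ℕ) (ha : a ≤ (r : ℕ)) :
    DecB (insPerm σ r) a ↔ DecB σ a := by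
  constructor
  · intro h i j hij hv
    have := h (Fin.castSucc i) (Fin.castSucc j) (Fin.castSucc_lt_castSucc_iff.mpr hij) ?_
    · rw [Fin.lt_def, insPerm_castSucc, insPerm_castSucc, succAbove_val, succAbove_val] at this
      rw [Fin.lt_def]
      split at this <;> split at this <;> omega
    · rw [insPerm_castSucc, succAbove_val]
      split <;> omega
  · intro h i j hij hv
    rcases Fin.eq_castSucc_or_eq_last j with ⟨j', rfl⟩ | rfl
    · obtain ⟨i', rfl⟩ := exists_castSucc_of_lt_last (hij.trans (Fin.castSucc_lt_last j'))
      rw [insPerm_castSucc, succAbove_val] at hv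
      have hv' : (σ j' : ℕ) < a := by split at hv <;> omega
      have hs := h i' j' (Fin.castSucc_lt_castSucc_iff.mp hij) hv'
      rw [Fin.lt_def, insPerm_castSucc, insPerm_castSucc, succAbove_val, succAbove_val]
      rw [Fin.lt_def] at hs
      split <;> split <;> omega
    · rw [insPerm_last] at hv
      omega
  
lemma not_decB_insPerm_pos (σ : Perm (Fin n)) (r : Fin (n + 1)) (hr : 1 ≤ (r : ℕ)) :
    ¬ DecB (insPerm σ r) ((r : ℕ) + 1) := by
  intro h
  have hn : 0 < n := by have := r.isLt; omega
  have happ := h (Fin.castSucc (σ.symm ⟨0, hn⟩)) (Fin.last n)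
    (Fin.castSucc_lt_last _) (by rw [insPerm_last]; omega)
  rw [Fin.lt_def, insPerm_last, insPerm_castSucc, succAbove_val, Equiv.apply_symm_apply] at happ
  simp only at happ
  split at happ <;> omega

lemma mdec_insPerm_zero (σ : Perm (Fin n)) : mdec (insPerm σ (0 : Fin (n + 1))) = mdec σ + 1 := by
  rw [mdec, Nat.findGreatest_eq_iff]
  refine ⟨by have := mdec_le σ; omega,
    fun _ => (decB_insPerm_zero σ (mdec σ)).2 (decB_mdec σ), ?_⟩
  intro k hk hkb hP
  have hk1 : k - 1 + 1 = k := by omega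
  rw [← hk1] at hP
  have := (decB_insPerm_zero σ (k - 1)).1 hP
  have := (le_mdec_iff (σ := σ) (by omega)).1 this
  omega

lemma mdec_insPerm_pos (σ : Perm (Fin n)) (r : Fin (n + 1)) (hr : 1 ≤ (r : ℕ))
    (hd : DecB σ (r : ℕ)) : mdec (insPerm σ r) = (r : ℕ) := by
  rw [mdec, Nat.findGreatest_eq_iff]
  refine ⟨by have := r.isLt; omega,
    fun _ => (decB_insPerm_pos σ r _ le_rfl).2 hd, ?_⟩
  intro k hk _ hP
  exact not_decB_insPerm_pos σ r hr (decB_mono (by omega) hP)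

lemma goodP_insPerm_iff (m : ℕ) (σ : Perm (Fin n)) (r : Fin (n + 1)) :
    GoodP m (insPerm σ r) ↔ GoodP m σ ∧ (r : ℕ) ≤ statm m σ := by
  constructor
  · rintro ⟨h123, hrp⟩
    have hd := (avoids123_insPerm σ r).1 h123
    have hrpσ : Avoids σ (rpat (m + 1)) := fun hc => hrp (contains_rpat_insPerm_of σ r _ hc)
    have hrm : (r : ℕ) ≤ m := by
      by_contra hgt
      exact hrp (contains_rpat_insPerm_chain σ r (m + 1) hd.2 (by omega))
    have hrmd : (r : ℕ) ≤ mdec σ := (le_mdec_iff (by have := r.isLt; omega)).1 hd.2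
    exact ⟨⟨hd.1, hrpσ⟩, le_min hrmd hrm⟩
  · rintro ⟨⟨h123, hrp⟩, hle⟩
    have hdec : DecB σ (r : ℕ) :=
      decB_mono (le_trans hle (min_le_left _ _)) (decB_mdec σ)
    constructor
    · exact (avoids123_insPerm σ r).2 ⟨h123, hdec⟩
    · intro hc
      rcases contains_rpat_insPerm_elim σ r (m + 1) hc with h | h
      · exact hrp h
      · have : (r : ℕ) ≤ m := le_trans hle (min_le_right _ _)
        omega

lemma statm_insPerm (m : ℕ) (σ : Perm (Fin n)) (r : Fin (n + 1))
    (hle : (r : ℕ) ≤ statm m σ) :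
    statm m (insPerm σ r) = if (r : ℕ) = 0 then min (statm m σ + 1) m else (r : ℕ) := by
  by_cases h0 : (r : ℕ) = 0
  · have hr0 : r = 0 := Fin.ext h0
    rw [if_pos h0, hr0, statm, mdec_insPerm_zero, statm]
    omega
  · have hdec : DecB σ (r : ℕ) :=
      decB_mono (le_trans hle (min_le_left _ _)) (decB_mdec σ)
    rw [if_neg h0, statm, mdec_insPerm_pos σ r (by omega) hdec]
    have h1 : (r : ℕ) ≤ m := le_trans hle (min_le_right _ _)
    omega

end DecBsec


section Count

open scoped Classical

lemma card_r (n m t₀ t : ℕ) (ht₀n : t₀ ≤ n) (ht₀m : t₀ ≤ m) :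
    (univ.filter fun r : Fin (n + 1) =>
      (r : ℕ) ≤ t₀ ∧ (if (r : ℕ) = 0 then min (t₀ + 1) m else (r : ℕ)) = t).card
      = Mm m t₀ t := by
  rw [Mm]
  have hset : (univ.filter fun r : Fin (n + 1) =>
      (r : ℕ) ≤ t₀ ∧ (if (r : ℕ) = 0 then min (t₀ + 1) m else (r : ℕ)) = t)
      = (if t = min (t₀ + 1) m then {(0 : Fin (n + 1))} else ∅)
        ∪ (if 1 ≤ t ∧ t ≤ t₀ then {(⟨t % (n + 1), Nat.mod_lt t (Nat.succ_pos n)⟩ : Fin (n + 1))} else ∅) := by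
    ext r
    simp only [mem_filter, mem_univ, true_and, mem_union]
    constructor
    · rintro ⟨hle, hval⟩
      by_cases h0 : (r : ℕ) = 0
      · left
        rw [if_pos h0] at hval
        rw [if_pos hval.symm, mem_singleton]
        exact Fin.ext h0
      · right
        rw [if_neg h0] at hval
        rw [if_pos ⟨by omega, by omega⟩, mem_singleton]
        apply Fin.ext
        show (r : ℕ) = t % (n + 1)
        have ht : t % (n + 1) = t := Nat.mod_eq_of_lt (by omega)
        omega
    · rintro (h | h)
      · split_ifs at h with hc
        · rw [mem_singleton] at h
          subst h
          refine ⟨by simp, ?_⟩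
          simp only [Fin.val_zero]
          rw [if_pos trivial]
          omega
        · exact absurd h (notMem_empty r)
      · split_ifs at h with hc
        · rw [mem_singleton] at h
          subst h
          have hv : ((⟨t % (n + 1), Nat.mod_lt t (Nat.succ_pos n)⟩ : Fin (n + 1)) : ℕ) = t := by
            exact Nat.mod_eq_of_lt (by omega)
          refine ⟨by rw [hv]; omega, ?_⟩
          rw [if_neg (by rw [hv]; omega), hv]
        · exact absurd h (notMem_empty r)
  rw [hset, Finset.card_union_of_disjoint]
  · congr 1 <;> split_ifs <;> simp
  · apply Finset.disjoint_left.mpr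
    intro x hx hx'
    split_ifs at hx hx' with h1 h2
    · rw [mem_singleton] at hx hx'
      rw [hx] at hx'
      have h3 : (0 : ℕ) = t % (n + 1) := congrArg Fin.val hx'
      have ht : t % (n + 1) = t := Nat.mod_eq_of_lt (by omega)
      omega
    · exact absurd hx' (notMem_empty x)
    · exact absurd hx (notMem_empty x)
    · exact absurd hx (notMem_empty x)

noncomputable def cntP (m n t : ℕ) : ℕ :=
  (univ.filter fun σ : Perm (Fin n) => GoodP m σ ∧ statm m σ = t).card

lemma goodP_zero (m : ℕ) (σ : Perm (Fin 0)) : GoodP m σ := by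
  constructor <;> rintro ⟨f, -, -⟩ <;> exact (f 0).elim0

lemma statm_zero_perm (m : ℕ) (σ : Perm (Fin 0)) : statm m σ = 0 := by
  have := statm_le_n m σ; omega

lemma cntP_zero (m t : ℕ) : cntP m 0 t = if t = 0 then 1 else 0 := by
  rw [cntP]
  split_ifs with h
  · subst h
    rw [Finset.filter_true_of_mem (fun σ _ => ⟨goodP_zero m σ, statm_zero_perm m σ⟩)]
    rw [Finset.card_univ]
    simp
  · rw [Finset.filter_false_of_mem, Finset.card_empty]
    rintro σ _ ⟨-, hs⟩
    rw [statm_zero_perm] at hs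
    exact h hs.symm

lemma cntP_succ (m n t : ℕ) :
    cntP m (n + 1) t = ∑ t₀ ∈ range (m + 1), cntP m n t₀ * Mm m t₀ t := by
  have step1 : cntP m (n + 1) t
      = (univ.filter fun p : Perm (Fin n) × Fin (n + 1) =>
          GoodP m (insPerm p.1 p.2) ∧ statm m (insPerm p.1 p.2) = t).card := by
    rw [cntP, ← Fintype.card_subtype, ← Fintype.card_subtype]
    exact (Fintype.card_congr (Equiv.subtypeEquiv insEquiv (fun p => Iff.rfl))).symm
  rw [step1]
  have hpred : ∀ p : Perm (Fin n) × Fin (n + 1), p ∈ (univ : Finset (Perm (Fin n) × Fin (n + 1))) →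
      ((GoodP m (insPerm p.1 p.2) ∧ statm m (insPerm p.1 p.2) = t)
      ↔ (GoodP m p.1 ∧ ((p.2 : ℕ) ≤ statm m p.1 ∧
          (if (p.2 : ℕ) = 0 then min (statm m p.1 + 1) m else (p.2 : ℕ)) = t))) := by
    rintro ⟨σ, r⟩ -
    constructor
    · rintro ⟨hg, hs⟩
      have h1 := (goodP_insPerm_iff m σ r).1 hg
      refine ⟨h1.1, h1.2, ?_⟩
      rw [← statm_insPerm m σ r h1.2]; exact hs
    · rintro ⟨hg, hle, hs⟩
      exact ⟨(goodP_insPerm_iff m σ r).2 ⟨hg, hle⟩,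
        by rw [statm_insPerm m σ r hle]; exact hs⟩
  rw [Finset.filter_congr hpred]
  rw [Finset.card_filter]
  rw [← Finset.univ_product_univ, Finset.sum_product]
  have inner : ∀ σ : Perm (Fin n),
      (∑ r : Fin (n + 1), if GoodP m σ ∧ ((r : ℕ) ≤ statm m σ ∧
          (if (r : ℕ) = 0 then min (statm m σ + 1) m else (r : ℕ)) = t) then 1 else 0)
      = if GoodP m σ then Mm m (statm m σ) t else 0 := by
    intro σ
    by_cases hg : GoodP m σ
    · simp only [hg, true_and, if_true]
      rw [← Finset.card_filter]
      exact card_r n m (statm m σ) t (statm_le_n m σ) (statm_le m σ)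
    · simp [hg]
  rw [Finset.sum_congr rfl (fun σ _ => inner σ)]
  rw [← Finset.sum_filter]
  rw [← Finset.sum_fiberwise_of_maps_to
    (g := statm m) (t := range (m + 1))
    (fun σ _ => mem_range.mpr (by have := statm_le m σ; omega))]
  apply Finset.sum_congr rfl
  intro t₀ _
  have hconst : ∀ σ ∈ (univ.filter fun σ : Perm (Fin n) => GoodP m σ).filter
      (fun σ => statm m σ = t₀), Mm m (statm m σ) t = Mm m t₀ t := by
    intro σ hσ
    rw [mem_filter] at hσ
    rw [hσ.2]
  rw [Finset.sum_congr rfl hconst, Finset.sum_const, smul_eq_mul, Finset.filter_filter]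
  rfl

lemma cntP_eq_vc (m : ℕ) : ∀ n t, cntP m n t = vc m n t := by
  intro n
  induction n with
  | zero => intro t; rw [cntP_zero]; rfl
  | succ n ih =>
    intro t
    rw [cntP_succ]
    show _ = ∑ t₀ ∈ range (m + 1), vc m n t₀ * Mm m t₀ t
    exact Finset.sum_congr rfl (fun t₀ _ => by rw [ih t₀])

lemma card_goodP (m n : ℕ) :
    (univ.filter fun σ : Perm (Fin n) => GoodP m σ).card = fv m n 0 := by
  rw [← vc_sum m n]
  rw [Finset.card_eq_sum_card_fiberwise
    (f := statm m) (t := range (m + 1))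
    (fun σ _ => mem_range.mpr (by have := statm_le m σ; omega))]
  apply Finset.sum_congr rfl
  intro t₀ _
  rw [Finset.filter_filter]
  rw [show ((univ.filter fun σ : Perm (Fin n) => GoodP m σ ∧ statm m σ = t₀)).card
    = cntP m n t₀ from rfl]
  exact cntP_eq_vc m n t₀

end Count


section Final

open scoped Classical

lemma fv_conv (m n : ℕ) :
    fv (m + 1) (n + 1) 0 = ∑ i ∈ range (n + 1), fv m i 0 * fv (m + 1) (n - i) 0 := by
  have h0 := fv_zero_succ (m + 1) n (by omega)
  have h1 := fv_conv_aux m n 0 (by omega)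
  simp only [Nat.zero_add, Nat.sub_zero] at h1
  rw [h0, h1, Finset.sum_range_succ]
  have hterm : fv m n 0 * fv (m + 1) (n - n) 0 = fv m n 0 := by
    simp [fv, Nat.sub_self]
  rw [hterm, add_comm (∑ i ∈ range n, fv m i 0 * fv (m + 1) (n - i) 0) (fv m n 0)]
  congr 1
  apply Finset.sum_congr rfl
  intro i hi
  rw [mem_range] at hi
  have h2 : n - i = (n - 1 - i) + 1 := by omega
  rw [h2, fv_zero_succ _ _ (by omega)]

lemma natCard_eq (m n : ℕ) :
    Nat.card {π : Perm (Fin n) // Avoids π p123 ∧ Avoids π (rpat (m + 1))} = fv m n 0 := by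
  rw [Nat.card_eq_fintype_card, Fintype.card_subtype, ← card_goodP m n]
  refine congrArg Finset.card ?_
  apply Finset.filter_congr
  intro σ _
  exact Iff.rfl

theorem stmt12 (k : ℕ) (hk : 3 ≤ k) :
    (PowerSeries.mk fun n => ((Nat.card {π : Equiv.Perm (Fin n) //
        Avoids π p123 ∧ Avoids π (rpat k)} : ℕ) : ℤ)) *
      (1 - PowerSeries.X * PowerSeries.mk fun n => ((Nat.card {π : Equiv.Perm (Fin n) //
        Avoids π p123 ∧ Avoids π (rpat (k - 1))} : ℕ) : ℤ)) = 1 := by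

  have hA : ∀ n : ℕ, Nat.card {π : Equiv.Perm (Fin n) //
      Avoids π p123 ∧ Avoids π (rpat k)} = fv (k - 1) n 0 := by
    intro n
    have h := natCard_eq (k - 1) n
    rw [show k - 1 + 1 = k by omega] at h
    exact h
  have hB : ∀ n : ℕ, Nat.card {π : Equiv.Perm (Fin n) //
      Avoids π p123 ∧ Avoids π (rpat (k - 1))} = fv (k - 2) n 0 := by
    intro n
    have h := natCard_eq (k - 2) n
    rw [show k - 2 + 1 = k - 1 by omega] at h
    exact h
  simp only [hA, hB]
  set F : PowerSeries ℤ := PowerSeries.mk fun n => ((fv (k - 1) n 0 : ℕ) : ℤ) with hF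
  set G : PowerSeries ℤ := PowerSeries.mk fun n => ((fv (k - 2) n 0 : ℕ) : ℤ) with hG
  have key : ∀ n : ℕ, ((fv (k - 1) (n + 1) 0 : ℕ) : ℤ)
      = ∑ p ∈ Finset.HasAntidiagonal.antidiagonal n, ((fv (k - 2) p.1 0 : ℕ) : ℤ) * ((fv (k - 1) p.2 0 : ℕ) : ℤ) := by
    intro n
    rw [Finset.Nat.sum_antidiagonal_eq_sum_range_succ_mk]
    have hc := fv_conv (k - 2) n
    rw [show k - 2 + 1 = k - 1 by omega] at hc
    rw [hc]
    push_cast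
    rfl
  have E : F = 1 + PowerSeries.X * (G * F) := by
    apply PowerSeries.ext
    intro N
    cases N with
    | zero =>
      simp only [hF, PowerSeries.coeff_mk, map_add, PowerSeries.coeff_one]
      rw [PowerSeries.coeff_zero_eq_constantCoeff, map_mul]
      simp [fv]
    | succ n =>
      rw [map_add, PowerSeries.coeff_succ_X_mul, PowerSeries.coeff_mul, hF,
        PowerSeries.coeff_mk, PowerSeries.coeff_one, if_neg (by omega)]
      rw [key n, zero_add]
      simp only [hG, PowerSeries.coeff_mk]
  have E2 : PowerSeries.X * (G * F) = F - 1 := by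
    nth_rewrite 2 [E]
    ring
  calc F * (1 - PowerSeries.X * G) = F - PowerSeries.X * (G * F) := by ring
    _ = F - (F - 1) := by rw [E2]
    _ = 1 := by ring


end Final
end

section
/- Let k ≥ 3 and n ≥ 1. Let s_k be the pattern (k−1)(k−2) ⋯ 2 1 (k+1) k and let r_k be the pattern k (k−1) ⋯ 2 1 (k+1), both of length k+1. If π is a permutation of {1,…,n} avoiding 123, s_k and r_k, and π(l) = n, then l ≤ k. -/
/-! Let `π l = n` be the maximum. Avoiding `123` forces `π` to decrease strictly before position `l`:
an ascent `π i < π j` with `i < j < l` would extend to a `123` by `π l`. If `l > k`, the `k` entries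
just before `l` then form a decreasing run followed by the maximum, i.e. an occurrence of `r_k`. -/

open Function

variable {n k : ℕ} {σ : Equiv.Perm (Fin n)}

theorem contains_of_lt_imp_lt {τ : Fin k → ℕ} (hτ : Injective τ) {f : Fin k → Fin n}
    (hf : StrictMono f) (h : ∀ a b, τ a < τ b → σ (f a) < σ (f b)) : Contains σ τ := by
  refine ⟨f, hf, fun a b => ⟨fun hσ => ?_, h a b⟩⟩
  rcases lt_trichotomy (τ a) (τ b) with hab | hab | hab
  · exact hab
  · exact absurd hσ (by rw [hτ hab]; exact lt_irrefl _)
  · exact absurd (h b a hab) hσ.asymm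

theorem contains_p123 {i j l : Fin n} (hij : i < j) (hjl : j < l) (hσij : σ i < σ j)
    (hσjl : σ j < σ l) : Contains σ p123 := by
  have hp123 : StrictMono p123 := by decide
  have hf : StrictMono ![i, j, l] := Fin.strictMono_iff_lt_succ.2 <| by
    simp [Fin.forall_fin_two, hij, hjl]
  have hσf : StrictMono (σ ∘ ![i, j, l]) := Fin.strictMono_iff_lt_succ.2 <| by
    simp [Fin.forall_fin_two, hσij, hσjl]
  exact contains_of_lt_imp_lt hp123.injective hf fun a b hab => hσf (hp123.lt_iff_lt.1 hab)

theorem Avoids.strictAntiOn_Iio_of_forall_lt (h : Avoids σ p123) {l : Fin n}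
    (hl : ∀ x ≠ l, σ x < σ l) : StrictAntiOn σ (Set.Iio l) := by
  intro i hi j hj hij
  by_contra! hle
  have hσij : σ i < σ j := lt_of_le_of_ne hle (σ.injective.ne hij.ne)
  exact h (contains_p123 hij hj hσij (hl j hj.ne))

theorem rpat_injective : Injective (rpat k) := by
  intro a b hab
  have ha := a.isLt
  have hb := b.isLt
  simp only [rpat] at hab
  split_ifs at hab <;> omega

theorem contains_rpat_of_strictAntiOn {l : Fin n} (hkl : k ≤ l.val)
    (hanti : StrictAntiOn σ (Set.Iio l)) (hl : ∀ x ≠ l, σ x < σ l) : Contains σ (rpat k) := by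
  set f : Fin (k + 1) → Fin n := fun a => ⟨l.val - k + a.val, by omega⟩ with hf_def
  have hf : StrictMono f := fun a b hab => by simp only [hf_def, Fin.mk_lt_mk]; omega
  refine contains_of_lt_imp_lt rpat_injective hf fun a b hab => ?_
  have ha := a.isLt
  have hb := b.isLt
  simp only [rpat] at hab
  split_ifs at hab with hak hbk hbk
  · omega
  · omega
  · have hfb : f b = l := Fin.ext (by simp only [hf_def]; omega)
    exact hfb ▸ hl _ (hfb ▸ hf.injective.ne (Fin.ne_of_val_ne (by omega)))
  · have hfa : f a < l := Fin.mk_lt_mk.2 (by omega)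
    have hfb : f b < l := Fin.mk_lt_mk.2 (by omega)
    exact hanti hfb hfa (hf (Fin.mk_lt_mk.2 (by omega)))

theorem stmt17_general (k n : ℕ) (π : Equiv.Perm (Fin n))
    (h1 : Avoids π p123) (h3 : Avoids π (rpat k)) :
    ∀ l : Fin n, (π l).val = n - 1 → l.val + 1 ≤ k := by
  intro l hl
  have hmax : ∀ x ≠ l, π x < π l := fun x hx =>
    lt_of_le_of_ne (Fin.le_def.2 (by have := (π x).isLt; omega)) (π.injective.ne hx)
  by_contra! hkl
  exact h3 (contains_rpat_of_strictAntiOn (by omega) (h1.strictAntiOn_Iio_of_forall_lt hmax) hmax)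

theorem stmt17 (k n : ℕ) (hk : 3 ≤ k) (hn : 1 ≤ n) (π : Equiv.Perm (Fin n))
    (h1 : Avoids π p123) (h2 : Avoids π (spat k)) (h3 : Avoids π (rpat k)) :
    ∀ l : Fin n, (π l).val = n - 1 → l.val + 1 ≤ k :=
  stmt17_general k n π h1 h3
end
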